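/- Let C be an s-extremal singly even self-dual [24k+8, 12k+4, 4k+2] code, i.e., a singly even self-dual code of length 24k+8 with minimum weight d(C) = 4k+2 whose shadow S has minimum weight d(S) = 4k+4. Then the two doubly even self-dual neighbors C₀ ∪ C₁ and C₀ ∪ C₃ of C have minimum weight exactly 4k+4 (they are extremal), and each has covering radius exactly 4k+2. -/

import Mathlib

open Matrix

/-- The (Hamming) weight of a vector in 𝔽₂ⁿ. -/
def wt {n : ℕ} (x : Fin n → ZMod 2) : ℕ :=
  (Finset.univ.filter (fun i => x i ≠ 0)).card

/-- The dual of a set of vectors, w.r.t. the standard inner product. -/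
def dualSet {n : ℕ} (S : Set (Fin n → ZMod 2)) : Set (Fin n → ZMod 2) :=
  {x | ∀ y ∈ S, x ⬝ᵥ y = 0}

/-- The minimum non-zero weight among vectors of a set. -/
noncomputable def minWtSet {n : ℕ} (S : Set (Fin n → ZMod 2)) : ℕ :=
  sInf {w | ∃ x ∈ S, x ≠ 0 ∧ wt x = w}

/-- The minimum weight of a linear code. -/
noncomputable def minWt {n : ℕ} (C : Submodule (ZMod 2) (Fin n → ZMod 2)) : ℕ :=
  minWtSet (C : Set (Fin n → ZMod 2))

/-- The minimum weight of the coset `x + C`. -/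
noncomputable def cosetMinWt {n : ℕ} (C : Submodule (ZMod 2) (Fin n → ZMod 2))
    (x : Fin n → ZMod 2) : ℕ :=
  sInf {w | ∃ c ∈ C, wt (x + c) = w}

/-- The covering radius: the largest minimum weight of a coset. -/
noncomputable def coveringRadius {n : ℕ} (C : Submodule (ZMod 2) (Fin n → ZMod 2)) : ℕ :=
  sSup {r | ∃ x : Fin n → ZMod 2, cosetMinWt C x = r}

/-! For `s` in the shadow `S = C₀^⊥ \ C` and `c ∈ C`, `s ⬝ c = 0` exactly when `c ∈ C₀`, because
`C₀` has index two in `C`; hence `S + S ⊆ C`. For `v ∈ S` this makes `D = C₀ ∪ (v + C₀)`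
self-dual, and makes all weights in `S` congruent mod 4, hence divisible by 4 since `S` has a word
of weight `4k+4`: `D` is doubly even with nonzero weights `≥ 4k+4`. A word `c₂ ∈ C` of weight
`4k+2` lies at distance `≥ 4k+2` from `D`. Delsarte's bound (a coset of `D^⊥` contains a word
whose weight is at most the number of nonzero weights of `D`) applied to the weights
`4k+4, 4k+8, …, 20k+4, 24k+8` gives covering radius `≤ 4k+2`; and if `4k+4` were not a weight,
the coset `c₂ + D` would contain a word of weight `≤ 4k+1`. -/

section ZModModule

variable {M : Type*} [AddCommGroup M] [Module (ZMod 2) M]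

lemma ZModModule.add_add_cancel_left (x y : M) : x + (x + y) = y := by
  rw [← add_assoc, ZModModule.add_self, zero_add]

lemma ZModModule.mem_image_add_iff (s : Set M) (v x : M) : x ∈ (v + ·) '' s ↔ v + x ∈ s := by
  rw [Set.image_add_left, Set.mem_preimage, ZModModule.neg_eq_self]

lemma ZModModule.mem_sup_span_singleton_iff (p : Submodule (ZMod 2) M) (v x : M) :
    x ∈ p ⊔ (ZMod 2) ∙ v ↔ x ∈ p ∨ v + x ∈ p := by
  simp only [Submodule.mem_sup, Submodule.mem_span_singleton]
  constructor
  · rintro ⟨y, hy, _, ⟨a, rfl⟩, rfl⟩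
    obtain rfl | rfl : a = 0 ∨ a = 1 := by revert a; decide
    · left
      simpa using hy
    · right
      rwa [one_smul, add_comm y v, ZModModule.add_add_cancel_left]
  · rintro (h | h)
    · exact ⟨x, h, 0, ⟨0, zero_smul _ _⟩, add_zero x⟩
    · refine ⟨v + x, h, v, ⟨1, one_smul _ _⟩, ?_⟩
      rw [add_comm v x, add_assoc, ZModModule.add_self, add_zero]

lemma ZModModule.coe_sup_span_singleton (p : Submodule (ZMod 2) M) (v : M) :
    ((p ⊔ (ZMod 2) ∙ v : Submodule (ZMod 2) M) : Set M) = ↑p ∪ (v + ·) '' ↑p := by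
  ext x
  rw [Set.mem_union, ZModModule.mem_image_add_iff]
  exact ZModModule.mem_sup_span_singleton_iff p v x

end ZModModule

lemma ZMod.add_eq_zero_of_eq_zero_iff_eq_zero {a b : ZMod 2} (h : a = 0 ↔ b = 0) : a + b = 0 := by
  revert a b; decide

section Weight

open Finset

variable {n : ℕ}

lemma wt_eq_sum_val (x : Fin n → ZMod 2) : wt x = ∑ i, (x i).val := by
  rw [wt, card_filter]
  exact sum_congr rfl fun i _ => by generalize x i = a; revert a; decide

lemma wt_add_add_two_mul_wt_mul (x y : Fin n → ZMod 2) :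
    wt (x + y) + 2 * wt (x * y) = wt x + wt y := by
  simp only [wt_eq_sum_val, mul_sum, ← sum_add_distrib, Pi.add_apply, Pi.mul_apply]
  exact sum_congr rfl fun i _ => by generalize x i = a; generalize y i = b; revert a b; decide

lemma wt_add_le (x y : Fin n → ZMod 2) : wt (x + y) ≤ wt x + wt y := by
  have := wt_add_add_two_mul_wt_mul x y
  omega

lemma wt_eq_zero_iff {x : Fin n → ZMod 2} : wt x = 0 ↔ x = 0 := by
  simp [wt, filter_eq_empty_iff, funext_iff]

lemma wt_zero : wt (0 : Fin n → ZMod 2) = 0 :=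
  wt_eq_zero_iff.2 rfl

lemma wt_one : wt (1 : Fin n → ZMod 2) = n := by
  simp [wt]

lemma wt_add_one_add_wt (x : Fin n → ZMod 2) : wt (x + 1) + wt x = n := by
  simp only [wt_eq_sum_val, ← sum_add_distrib, Pi.add_apply, Pi.one_apply]
  calc ∑ i, ((x i + 1).val + (x i).val) = ∑ _i : Fin n, 1 :=
        sum_congr rfl fun i _ => by generalize x i = a; revert a; decide
    _ = n := by simp

lemma wt_single_le (i : Fin n) : wt (Pi.single i (1 : ZMod 2)) ≤ 1 := by
  rw [wt_eq_sum_val, sum_eq_single i (fun j _ hj => by simp [Pi.single_eq_of_ne hj]) (by simp)]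
  simp only [Pi.single_eq_same]
  decide

lemma sum_eq_wt (x : Fin n → ZMod 2) : ∑ i, x i = (wt x : ZMod 2) := by
  simp [wt_eq_sum_val]

lemma dotProduct_eq_wt_mul (x y : Fin n → ZMod 2) : x ⬝ᵥ y = (wt (x * y) : ZMod 2) :=
  sum_eq_wt (x * y)

lemma dotProduct_self_eq_wt (x : Fin n → ZMod 2) : x ⬝ᵥ x = (wt x : ZMod 2) := by
  rw [dotProduct_eq_wt_mul, show x * x = x from funext fun i => by
    change x i * x i = x i
    generalize x i = a
    revert a
    decide]

lemma dotProduct_self_eq_dotProduct_one (x : Fin n → ZMod 2) : x ⬝ᵥ x = x ⬝ᵥ 1 := by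
  rw [dotProduct_one, sum_eq_wt, dotProduct_self_eq_wt]

end Weight

section MinWeight

variable {n : ℕ}

lemma minWtSet_le_wt {S : Set (Fin n → ZMod 2)} {x : Fin n → ZMod 2} (hx : x ∈ S) (h0 : x ≠ 0) :
    minWtSet S ≤ wt x :=
  Nat.sInf_le ⟨x, hx, h0, rfl⟩

lemma exists_wt_eq_minWtSet {S : Set (Fin n → ZMod 2)} (h : minWtSet S ≠ 0) :
    ∃ x ∈ S, x ≠ 0 ∧ wt x = minWtSet S :=
  Nat.sInf_mem (Nat.nonempty_of_pos_sInf (Nat.pos_of_ne_zero h))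

lemma minWtSet_eq {S : Set (Fin n → ZMod 2)} {d : ℕ} (hle : ∀ x ∈ S, x ≠ 0 → d ≤ wt x)
    {x : Fin n → ZMod 2} (hx : x ∈ S) (h0 : x ≠ 0) (hwt : wt x = d) : minWtSet S = d :=
  le_antisymm (hwt ▸ minWtSet_le_wt hx h0)
    (le_csInf ⟨_, x, hx, h0, rfl⟩ (by rintro _ ⟨y, hy, hy0, rfl⟩; exact hle y hy hy0))

lemma coveringRadius_eq (D : Submodule (ZMod 2) (Fin n → ZMod 2)) {r : ℕ}
    (hcov : ∀ x, ∃ c ∈ D, wt (x + c) ≤ r) {x₀ : Fin n → ZMod 2}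
    (hx₀ : ∀ c ∈ D, r ≤ wt (x₀ + c)) : coveringRadius D = r := by
  have hle : ∀ x, cosetMinWt D x ≤ r := by
    intro x
    obtain ⟨c, hc, h⟩ := hcov x
    exact le_trans (Nat.sInf_le ⟨c, hc, rfl⟩) h
  have h₀ : cosetMinWt D x₀ = r :=
    le_antisymm (hle x₀)
      (le_csInf ⟨_, 0, D.zero_mem, rfl⟩ (by rintro _ ⟨c, hc, rfl⟩; exact hx₀ c hc))
  have hbdd : ∀ s ∈ {r | ∃ x, cosetMinWt D x = r}, s ≤ r := by
    rintro s ⟨x, rfl⟩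
    exact hle x
  exact le_antisymm (csSup_le ⟨r, x₀, h₀⟩ hbdd) (le_csSup ⟨r, hbdd⟩ ⟨x₀, h₀⟩)

end MinWeight

section SelfDual

variable {n : ℕ} {C : Submodule (ZMod 2) (Fin n → ZMod 2)}

lemma add_mem_dualSet {S : Set (Fin n → ZMod 2)} {x y : Fin n → ZMod 2} (hx : x ∈ dualSet S)
    (hy : y ∈ dualSet S) : x + y ∈ dualSet S := fun z hz => by
  rw [add_dotProduct, hx z hz, hy z hz, add_zero]

lemma two_dvd_wt_of_selfDual (hsd : (C : Set (Fin n → ZMod 2)) = dualSet C)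
    {x : Fin n → ZMod 2} (hx : x ∈ C) : 2 ∣ wt x :=
  (ZMod.natCast_eq_zero_iff _ 2).mp (dotProduct_self_eq_wt x ▸ hsd.subset hx x hx)

lemma one_mem_of_selfDual (hsd : (C : Set (Fin n → ZMod 2)) = dualSet C) :
    (1 : Fin n → ZMod 2) ∈ C :=
  hsd.superset fun y hy => by
    rw [one_dotProduct, sum_eq_wt, ← dotProduct_self_eq_wt]
    exact hsd.subset hy y hy

end SelfDual

structure IsDoublyEvenSubcodeOfSelfDual {n : ℕ} (C₀ C : Submodule (ZMod 2) (Fin n → ZMod 2)) :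
    Prop where
  selfDual : (C : Set (Fin n → ZMod 2)) = dualSet C
  mem_iff : ∀ x, x ∈ C₀ ↔ x ∈ C ∧ 4 ∣ wt x

def shadow {n : ℕ} (C C₀ : Submodule (ZMod 2) (Fin n → ZMod 2)) : Set (Fin n → ZMod 2) :=
  dualSet (C₀ : Set (Fin n → ZMod 2)) \ C

lemma ne_zero_of_mem_shadow {n : ℕ} {C C₀ : Submodule (ZMod 2) (Fin n → ZMod 2)}
    {s : Fin n → ZMod 2} (hs : s ∈ shadow C C₀) : s ≠ 0 :=
  fun h => hs.2 (h ▸ C.zero_mem)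

namespace IsDoublyEvenSubcodeOfSelfDual

variable {n : ℕ} {C C₀ : Submodule (ZMod 2) (Fin n → ZMod 2)}

lemma mem_dualSet_of_mem (h : IsDoublyEvenSubcodeOfSelfDual C₀ C) {c : Fin n → ZMod 2}
    (hc : c ∈ C) : c ∈ dualSet (C₀ : Set (Fin n → ZMod 2)) :=
  fun y hy => h.selfDual.subset hc y ((h.mem_iff y).1 hy).1

-- `c ↦ wt c / 2 mod 2` is additive on the even self-orthogonal code `C`, with kernel `C₀`.
lemma add_mem_of_notMem_of_notMem (h : IsDoublyEvenSubcodeOfSelfDual C₀ C)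
    {c c' : Fin n → ZMod 2} (hc : c ∈ C) (hc' : c' ∈ C) (hc₀ : c ∉ C₀) (hc₀' : c' ∉ C₀) :
    c + c' ∈ C₀ := by
  rw [h.mem_iff] at hc₀ hc₀' ⊢
  have hcc' : 2 ∣ wt (c * c') :=
    (ZMod.natCast_eq_zero_iff _ 2).mp (dotProduct_eq_wt_mul c c' ▸ h.selfDual.subset hc c' hc')
  have := wt_add_add_two_mul_wt_mul c c'
  have := two_dvd_wt_of_selfDual h.selfDual hc
  have := two_dvd_wt_of_selfDual h.selfDual hc'
  simp only [hc, hc', true_and] at hc₀ hc₀'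
  exact ⟨C.add_mem hc hc', by omega⟩

lemma dotProduct_eq_zero_iff_mem (h : IsDoublyEvenSubcodeOfSelfDual C₀ C)
    {s c : Fin n → ZMod 2} (hs : s ∈ shadow C C₀) (hc : c ∈ C) : s ⬝ᵥ c = 0 ↔ c ∈ C₀ := by
  refine ⟨fun hsc => ?_, fun hc₀ => hs.1 c hc₀⟩
  by_contra hc₀
  refine hs.2 (h.selfDual.superset fun y hy => ?_)
  by_cases hy₀ : y ∈ C₀
  · exact hs.1 y hy₀
  · rw [← ZModModule.add_add_cancel_left c y, dotProduct_add, hsc,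
      hs.1 _ (h.add_mem_of_notMem_of_notMem hc hy hc₀ hy₀), add_zero]

lemma add_mem_of_mem_shadow (h : IsDoublyEvenSubcodeOfSelfDual C₀ C) {s t : Fin n → ZMod 2}
    (hs : s ∈ shadow C C₀) (ht : t ∈ shadow C C₀) : s + t ∈ C :=
  h.selfDual.superset fun c hc => by
    rw [add_dotProduct]
    exact ZMod.add_eq_zero_of_eq_zero_iff_eq_zero
      ((h.dotProduct_eq_zero_iff_mem hs hc).trans (h.dotProduct_eq_zero_iff_mem ht hc).symm)

lemma add_mem_shadow (h : IsDoublyEvenSubcodeOfSelfDual C₀ C) {s c : Fin n → ZMod 2}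
    (hs : s ∈ shadow C C₀) (hc : c ∈ C) : s + c ∈ shadow C C₀ :=
  ⟨add_mem_dualSet hs.1 (h.mem_dualSet_of_mem hc), fun hsc => hs.2 <| by
    simpa [add_assoc, ZModModule.add_self] using C.add_mem hsc hc⟩

lemma one_mem (h : IsDoublyEvenSubcodeOfSelfDual C₀ C) (hn : 4 ∣ n) :
    (1 : Fin n → ZMod 2) ∈ C₀ :=
  (h.mem_iff 1).2 ⟨one_mem_of_selfDual h.selfDual, wt_one.symm ▸ hn⟩

lemma dotProduct_self_eq_zero (h : IsDoublyEvenSubcodeOfSelfDual C₀ C) (hn : 4 ∣ n)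
    {s : Fin n → ZMod 2} (hs : s ∈ dualSet (C₀ : Set (Fin n → ZMod 2))) : s ⬝ᵥ s = 0 := by
  rw [dotProduct_self_eq_dotProduct_one]
  exact hs 1 (h.one_mem hn)

-- `s ⬝ t = s ⬝ (s + t)` vanishes iff `4 ∣ wt (s + t)`, while `s ⬝ t ≡ wt (s * t) (mod 2)`.
lemma four_dvd_wt_add_wt (h : IsDoublyEvenSubcodeOfSelfDual C₀ C) (hn : 4 ∣ n)
    {s t : Fin n → ZMod 2} (hs : s ∈ shadow C C₀) (ht : t ∈ shadow C C₀) : 4 ∣ wt s + wt t := by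
  have hst := h.add_mem_of_mem_shadow hs ht
  have hiff := h.dotProduct_eq_zero_iff_mem hs hst
  rw [dotProduct_add, h.dotProduct_self_eq_zero hn hs.1, zero_add, dotProduct_eq_wt_mul,
    ZMod.natCast_eq_zero_iff, h.mem_iff] at hiff
  simp only [hst, true_and] at hiff
  have := two_dvd_wt_of_selfDual h.selfDual hst
  have := wt_add_add_two_mul_wt_mul s t
  omega

lemma mem_shadow_of_add_mem (h : IsDoublyEvenSubcodeOfSelfDual C₀ C) {v x : Fin n → ZMod 2}
    (hv : v ∈ shadow C C₀) (hx : v + x ∈ C₀) : x ∈ shadow C C₀ := by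
  simpa [ZModModule.add_add_cancel_left] using h.add_mem_shadow hv ((h.mem_iff _).1 hx).1

lemma selfDual_sup_span (h : IsDoublyEvenSubcodeOfSelfDual C₀ C) (hn : 4 ∣ n)
    {v : Fin n → ZMod 2} (hv : v ∈ shadow C C₀) :
    ((C₀ ⊔ (ZMod 2) ∙ v : Submodule (ZMod 2) (Fin n → ZMod 2)) : Set (Fin n → ZMod 2)) =
      dualSet ↑(C₀ ⊔ (ZMod 2) ∙ v) := by
  ext z
  simp only [SetLike.mem_coe]
  constructor
  · rintro hz y hy
    obtain ⟨a, ha, _, hr, rfl⟩ := Submodule.mem_sup.1 hz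
    obtain ⟨r, rfl⟩ := Submodule.mem_span_singleton.1 hr
    obtain ⟨b, hb, _, hr', rfl⟩ := Submodule.mem_sup.1 hy
    obtain ⟨r', rfl⟩ := Submodule.mem_span_singleton.1 hr'
    have hab : a ⬝ᵥ b = 0 := h.mem_dualSet_of_mem ((h.mem_iff a).1 ha).1 b hb
    have hav : a ⬝ᵥ v = 0 := by rw [dotProduct_comm]; exact hv.1 a ha
    simp only [add_dotProduct, dotProduct_add, smul_dotProduct, dotProduct_smul, hab, hav,
      hv.1 b hb, h.dotProduct_self_eq_zero hn hv.1, smul_zero, add_zero]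
  · intro hz
    have hz₀ : z ∈ dualSet (C₀ : Set (Fin n → ZMod 2)) := fun y hy =>
      hz y (Submodule.mem_sup_left hy)
    have hzv : z ⬝ᵥ v = 0 :=
      hz v (Submodule.mem_sup_right (Submodule.mem_span_singleton_self v))
    rw [ZModModule.mem_sup_span_singleton_iff]
    by_cases hzC : z ∈ C
    · left
      rw [← h.dotProduct_eq_zero_iff_mem hv hzC, dotProduct_comm, hzv]
    · right
      have hzs : z ∈ shadow C C₀ := ⟨hz₀, hzC⟩
      rw [add_comm, ← h.dotProduct_eq_zero_iff_mem hzs (h.add_mem_of_mem_shadow hzs hv),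
        dotProduct_add, h.dotProduct_self_eq_zero hn hz₀, hzv, add_zero]

lemma four_dvd_wt_of_mem_sup (h : IsDoublyEvenSubcodeOfSelfDual C₀ C) (hn : 4 ∣ n)
    {v s₀ x : Fin n → ZMod 2} (hv : v ∈ shadow C C₀) (hs₀ : s₀ ∈ shadow C C₀) (h4 : 4 ∣ wt s₀)
    (hx : x ∈ C₀ ⊔ (ZMod 2) ∙ v) : 4 ∣ wt x := by
  rcases (ZModModule.mem_sup_span_singleton_iff _ _ _).1 hx with hx | hx
  · exact ((h.mem_iff x).1 hx).2
  · have := h.four_dvd_wt_add_wt hn (h.mem_shadow_of_add_mem hv hx) hs₀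
    omega

lemma le_wt_of_mem_sup (h : IsDoublyEvenSubcodeOfSelfDual C₀ C) {v x : Fin n → ZMod 2}
    (hv : v ∈ shadow C C₀) {d : ℕ} (hC : ∀ c ∈ C, c ≠ 0 → 4 * d + 2 ≤ wt c)
    (hS : ∀ s ∈ shadow C C₀, 4 * d + 4 ≤ wt s) (hx : x ∈ C₀ ⊔ (ZMod 2) ∙ v) (hx0 : x ≠ 0) :
    4 * d + 4 ≤ wt x := by
  rcases (ZModModule.mem_sup_span_singleton_iff _ _ _).1 hx with hx | hx
  · obtain ⟨hxC, h4⟩ := (h.mem_iff x).1 hx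
    have := hC x hxC hx0
    omega
  · exact hS x (h.mem_shadow_of_add_mem hv hx)

lemma le_wt_add_of_mem_sup (h : IsDoublyEvenSubcodeOfSelfDual C₀ C) {v c x : Fin n → ZMod 2}
    (hv : v ∈ shadow C C₀) (hc : c ∈ C) (hc₀ : c ∉ C₀) {d : ℕ}
    (hC : ∀ c ∈ C, c ≠ 0 → d ≤ wt c) (hS : ∀ s ∈ shadow C C₀, d ≤ wt s)
    (hx : x ∈ C₀ ⊔ (ZMod 2) ∙ v) : d ≤ wt (c + x) := by
  rcases (ZModModule.mem_sup_span_singleton_iff _ _ _).1 hx with hx | hx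
  · refine hC _ (C.add_mem hc ((h.mem_iff x).1 hx).1) fun hcx => hc₀ ?_
    rw [add_eq_zero_iff_eq_neg, ZModModule.neg_eq_self] at hcx
    exact hcx ▸ hx
  · rw [add_comm]
    exact hS _ (h.add_mem_shadow (h.mem_shadow_of_add_mem hv hx) hc)

end IsDoublyEvenSubcodeOfSelfDual

section Delsarte

open Finset

variable {n : ℕ}

def signChar : AddChar (ZMod 2) ℝ where
  toFun a := if a = 0 then 1 else -1
  map_zero_eq_one' := if_pos rfl
  map_add_eq_mul' a b := by
    obtain rfl | rfl : a = 0 ∨ a = 1 := by revert a; decide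
    all_goals obtain rfl | rfl : b = 0 ∨ b = 1 := by revert b; decide
    all_goals simp only [show (1 + 1 : ZMod 2) = 0 from rfl, add_zero, zero_add]
    all_goals norm_num

lemma signChar_of_ne_zero {a : ZMod 2} (ha : a ≠ 0) : signChar a = -1 := if_neg ha

lemma val_eq_one_sub_signChar_div_two (a : ZMod 2) : (a.val : ℝ) = (1 - signChar a) / 2 := by
  obtain rfl | rfl : a = 0 ∨ a = 1 := by revert a; decide
  · simp [signChar]
  · norm_num [signChar, ZMod.val_one]

/-- Real functions on `𝔽₂ⁿ` whose Walsh–Fourier expansion only involves characters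
`u ↦ (-1) ^ (u ⬝ z)` with `wt z ≤ s`. -/
def lowDegree (n s : ℕ) : Submodule ℝ ((Fin n → ZMod 2) → ℝ) :=
  Submodule.span ℝ ((fun z u => signChar (u ⬝ᵥ z)) '' {z | wt z ≤ s})

lemma signChar_dotProduct_mem_lowDegree {s : ℕ} {z : Fin n → ZMod 2} (hz : wt z ≤ s) :
    (fun u => signChar (u ⬝ᵥ z)) ∈ lowDegree n s :=
  Submodule.subset_span ⟨z, hz, rfl⟩

lemma const_mem_lowDegree (s : ℕ) (r : ℝ) : (fun _ => r) ∈ lowDegree n s := by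
  convert (lowDegree n s).smul_mem r
    (signChar_dotProduct_mem_lowDegree (z := 0) (by simp [wt_zero])) using 1
  funext u
  simp

lemma wt_mem_lowDegree : (fun u => (wt u : ℝ)) ∈ lowDegree n 1 := by
  have key : (fun u : Fin n → ZMod 2 => (wt u : ℝ)) =
      ∑ i, (2⁻¹ : ℝ) • ((fun _ => 1) - fun u => signChar (u ⬝ᵥ Pi.single i 1)) := by
    funext u
    simp only [wt_eq_sum_val, Nat.cast_sum, val_eq_one_sub_signChar_div_two, Finset.sum_apply,
      Pi.smul_apply, Pi.sub_apply, dotProduct_single, mul_one, smul_eq_mul]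
    exact sum_congr rfl fun i _ => by ring
  rw [key]
  exact Submodule.sum_mem _ fun i _ => Submodule.smul_mem _ _ <|
    Submodule.sub_mem _ (const_mem_lowDegree 1 1)
      (signChar_dotProduct_mem_lowDegree (wt_single_le i))

lemma mul_mem_lowDegree {a b : ℕ} {f g : (Fin n → ZMod 2) → ℝ} (hf : f ∈ lowDegree n a)
    (hg : g ∈ lowDegree n b) : f * g ∈ lowDegree n (a + b) := by
  have hfg := Submodule.mul_mem_mul hf hg
  rw [lowDegree, lowDegree, Submodule.span_mul_span] at hfg
  refine Submodule.span_mono ?_ hfg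
  rintro _ ⟨_, ⟨z, hz, rfl⟩, _, ⟨z', hz', rfl⟩, rfl⟩
  exact ⟨z + z', (wt_add_le z z').trans (add_le_add hz hz'),
    funext fun u => by simp [dotProduct_add, AddChar.map_add_eq_mul]⟩

lemma prod_sub_wt_mem_lowDegree (W : Finset ℕ) :
    (fun u : Fin n → ZMod 2 => ∏ w ∈ W, ((w : ℝ) - wt u)) ∈ lowDegree n W.card := by
  classical
  induction W using Finset.induction_on with
  | empty => simpa using const_mem_lowDegree 0 1
  | insert w W hw ih =>
    rw [card_insert_of_notMem hw, add_comm]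
    convert mul_mem_lowDegree (Submodule.sub_mem _ (const_mem_lowDegree 1 w) wt_mem_lowDegree) ih
      using 1
    funext u
    simp [prod_insert hw]

lemma sum_signChar_dotProduct_eq_zero (D : Submodule (ZMod 2) (Fin n → ZMod 2))
    [DecidablePred (· ∈ D)] {y : Fin n → ZMod 2} (hy : y ∉ dualSet (D : Set (Fin n → ZMod 2))) :
    ∑ u ∈ univ.filter (· ∈ D), signChar (u ⬝ᵥ y) = 0 := by
  obtain ⟨u₀, hu₀, hu₀y⟩ : ∃ u₀ ∈ D, u₀ ⬝ᵥ y ≠ 0 := by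
    by_contra! h
    exact hy fun u hu => by rw [dotProduct_comm]; exact h u hu
  have hshift : ∑ u ∈ univ.filter (· ∈ D), signChar ((u + u₀) ⬝ᵥ y) =
      ∑ u ∈ univ.filter (· ∈ D), signChar (u ⬝ᵥ y) :=
    sum_equiv (Equiv.addRight u₀) (fun u => by simp [D.add_mem_iff_left hu₀]) fun _ _ => rfl
  simp only [add_dotProduct, AddChar.map_add_eq_mul, signChar_of_ne_zero hu₀y, mul_neg_one,
    sum_neg_distrib] at hshift
  linarith

lemma sum_signChar_mul_eq_zero (D : Submodule (ZMod 2) (Fin n → ZMod 2)) [DecidablePred (· ∈ D)]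
    {s : ℕ} {x : Fin n → ZMod 2} (hx : ∀ c ∈ dualSet (D : Set (Fin n → ZMod 2)), s < wt (x + c))
    {f : (Fin n → ZMod 2) → ℝ} (hf : f ∈ lowDegree n s) :
    ∑ u ∈ univ.filter (· ∈ D), signChar (u ⬝ᵥ x) * f u = 0 := by
  induction hf using Submodule.span_induction with
  | mem f hf =>
    obtain ⟨z, hz, rfl⟩ := hf
    simp only [← AddChar.map_add_eq_mul, ← dotProduct_add]
    refine sum_signChar_dotProduct_eq_zero D fun hxz => ?_
    have := hx _ hxz
    rw [ZModModule.add_add_cancel_left] at this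
    exact absurd hz (not_le.2 this)
  | zero => simp
  | add f g _ _ hf hg => simp [mul_add, sum_add_distrib, hf, hg]
  | smul r f _ hf => simp [mul_left_comm _ r, ← mul_sum, hf]

/-- Delsarte's bound. The annihilator `β t = ∏_{w ∈ W, w ≠ 0} (w - t)` of the nonzero weights
of `D` has `β (wt u) = 0` on `D \ {0}` and `β 0 > 0`; if every `x + c` had weight `> deg β`,
`∑_{u ∈ D} (-1)^(u ⬝ x) β (wt u)` would vanish character by character. -/
theorem exists_mem_dualSet_wt_add_le (D : Submodule (ZMod 2) (Fin n → ZMod 2)) (W : Finset ℕ)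
    (hW : ∀ u ∈ D, u ≠ 0 → wt u ∈ W) (x : Fin n → ZMod 2) :
    ∃ c ∈ dualSet (D : Set (Fin n → ZMod 2)), wt (x + c) ≤ W.card := by
  classical
  by_contra! h
  have hsum := sum_signChar_mul_eq_zero D (fun c hc => card_erase_le.trans_lt (h c hc))
    (prod_sub_wt_mem_lowDegree (W.erase 0))
  rw [sum_eq_single_of_mem 0 (by simp) fun u hu hu0 => ?_] at hsum
  · simp [wt_zero, prod_eq_zero_iff] at hsum
  · have hu : wt u ∈ W.erase 0 :=
      mem_erase.2 ⟨wt_eq_zero_iff.not.2 hu0, hW u (by simpa using hu) hu0⟩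
    rw [prod_eq_zero hu (sub_self _), mul_zero]

end Delsarte

section Extremal

variable {n : ℕ}

lemma wt_eq_or_add_le_of_one_mem {D : Submodule (ZMod 2) (Fin n → ZMod 2)} (h1 : 1 ∈ D) {d : ℕ}
    (hd : ∀ x ∈ D, x ≠ 0 → d ≤ wt x) {x : Fin n → ZMod 2} (hx : x ∈ D) :
    wt x = n ∨ wt x + d ≤ n := by
  by_cases hx1 : x = 1
  · exact Or.inl (hx1 ▸ wt_one)
  · refine Or.inr ?_
    have := hd (x + 1) (D.add_mem hx h1) fun h => hx1 <| by
      rwa [add_eq_zero_iff_eq_neg, ZModModule.neg_eq_self] at h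
    have := wt_add_one_add_wt x
    omega

lemma exists_mem_wt_add_le_of_wt_mem (D : Submodule (ZMod 2) (Fin n → ZMod 2))
    (hsd : (D : Set (Fin n → ZMod 2)) = dualSet D) {a m : ℕ}
    (hW : ∀ x ∈ D, x ≠ 0 → wt x = n ∨ ∃ i < m, wt x = a + 4 * i) (x : Fin n → ZMod 2) :
    ∃ c ∈ D, wt (x + c) ≤ m + 1 := by
  classical
  obtain ⟨c, hc, hle⟩ := exists_mem_dualSet_wt_add_le D
    ((Finset.range m).image (a + 4 * ·) ∪ {n}) (fun u hu hu0 => by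
      rcases hW u hu hu0 with h | ⟨i, hi, h⟩
      · simp [h]
      · simp [h, hi]) x
  refine ⟨c, hsd.superset hc, hle.trans ?_⟩
  refine (Finset.card_union_le _ _).trans ?_
  simpa using Finset.card_image_le.trans (Finset.card_range m).le

variable (k : ℕ) {D : Submodule (ZMod 2) (Fin (24 * k + 8) → ZMod 2)}

lemma exists_mem_wt_add_le_of_extremal (hsd : (D : Set (Fin (24 * k + 8) → ZMod 2)) = dualSet D)
    (hde : ∀ x ∈ D, 4 ∣ wt x) (hd : ∀ x ∈ D, x ≠ 0 → 4 * k + 4 ≤ wt x)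
    (x : Fin (24 * k + 8) → ZMod 2) : ∃ c ∈ D, wt (x + c) ≤ 4 * k + 2 :=
  exists_mem_wt_add_le_of_wt_mem D hsd (a := 4 * k + 4) (m := 4 * k + 1) (fun y hy hy0 => by
    have := hde y hy
    have := hd y hy hy0
    rcases wt_eq_or_add_le_of_one_mem (one_mem_of_selfDual hsd) hd hy with h | h
    · exact Or.inl h
    · exact Or.inr ⟨wt y / 4 - (k + 1), by omega, by omega⟩) x

lemma exists_wt_eq_of_extremal (hsd : (D : Set (Fin (24 * k + 8) → ZMod 2)) = dualSet D)
    (hde : ∀ x ∈ D, 4 ∣ wt x) (hd : ∀ x ∈ D, x ≠ 0 → 4 * k + 4 ≤ wt x)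
    {x₀ : Fin (24 * k + 8) → ZMod 2} (hx₀ : ∀ c ∈ D, 4 * k + 2 ≤ wt (x₀ + c)) :
    ∃ c ∈ D, c ≠ 0 ∧ wt c = 4 * k + 4 := by
  by_contra! h
  obtain ⟨c, hc, hle⟩ := exists_mem_wt_add_le_of_wt_mem D hsd (a := 4 * k + 8) (m := 4 * k)
    (fun y hy hy0 => by
      have := hde y hy
      have := hd y hy hy0
      have := h y hy hy0
      rcases wt_eq_or_add_le_of_one_mem (one_mem_of_selfDual hsd) hd hy with h | h
      · exact Or.inl h
      · exact Or.inr ⟨wt y / 4 - (k + 2), by omega, by omega⟩) x₀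
  have := hx₀ c hc
  omega

end Extremal

namespace IsDoublyEvenSubcodeOfSelfDual

variable {k : ℕ} {C C₀ : Submodule (ZMod 2) (Fin (24 * k + 8) → ZMod 2)}

theorem sup_span_extremal (h : IsDoublyEvenSubcodeOfSelfDual C₀ C) (hd : minWt C = 4 * k + 2)
    (hS : minWtSet (shadow C C₀) = 4 * k + 4) {v : Fin (24 * k + 8) → ZMod 2}
    (hv : v ∈ shadow C C₀) :
    ((C₀ ⊔ (ZMod 2) ∙ v : Submodule _ _) : Set (Fin (24 * k + 8) → ZMod 2)) =
        dualSet ↑(C₀ ⊔ (ZMod 2) ∙ v) ∧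
      (∀ x ∈ C₀ ⊔ (ZMod 2) ∙ v, 4 ∣ wt x) ∧ minWt (C₀ ⊔ (ZMod 2) ∙ v) = 4 * k + 4 ∧
      coveringRadius (C₀ ⊔ (ZMod 2) ∙ v) = 4 * k + 2 := by
  have hn : 4 ∣ 24 * k + 8 := ⟨6 * k + 2, by ring⟩
  have hCwt : ∀ c ∈ C, c ≠ 0 → 4 * k + 2 ≤ wt c := fun c hc hc0 => hd ▸ minWtSet_le_wt hc hc0
  have hSwt : ∀ s ∈ shadow C C₀, 4 * k + 4 ≤ wt s := fun s hs =>
    hS ▸ minWtSet_le_wt hs (ne_zero_of_mem_shadow hs)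
  obtain ⟨c₂, hc₂, -, hc₂wt⟩ := exists_wt_eq_minWtSet (show minWt C ≠ 0 by omega)
  have hc₂₀ : c₂ ∉ C₀ := fun hc₂₀ => by
    have := ((h.mem_iff c₂).1 hc₂₀).2
    rw [hc₂wt, ← minWt, hd] at this
    omega
  obtain ⟨s₀, hs₀, -, hs₀wt⟩ := exists_wt_eq_minWtSet (S := shadow C C₀) (by omega)
  have hsdD := h.selfDual_sup_span hn hv
  have hdeD : ∀ x ∈ C₀ ⊔ (ZMod 2) ∙ v, 4 ∣ wt x := fun x hx =>
    h.four_dvd_wt_of_mem_sup hn hv hs₀ (by rw [hs₀wt, hS]; omega) hx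
  have hwtD : ∀ x ∈ C₀ ⊔ (ZMod 2) ∙ v, x ≠ 0 → 4 * k + 4 ≤ wt x := fun x hx hx0 =>
    h.le_wt_of_mem_sup hv hCwt hSwt hx hx0
  have hc₂D : ∀ x ∈ C₀ ⊔ (ZMod 2) ∙ v, 4 * k + 2 ≤ wt (c₂ + x) := fun x hx =>
    h.le_wt_add_of_mem_sup hv hc₂ hc₂₀ hCwt (fun s hs => by have := hSwt s hs; omega) hx
  obtain ⟨x₄, hx₄, hx₄0, hx₄wt⟩ := exists_wt_eq_of_extremal k hsdD hdeD hwtD hc₂D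
  exact ⟨hsdD, hdeD, minWtSet_eq hwtD hx₄ hx₄0 hx₄wt,
    coveringRadius_eq _ (exists_mem_wt_add_le_of_extremal k hsdD hdeD hwtD) hc₂D⟩

end IsDoublyEvenSubcodeOfSelfDual

theorem stmt8_general (k : ℕ) (C C₀ : Submodule (ZMod 2) (Fin (24*k+8) → ZMod 2))
    (hsd : (C : Set (Fin (24*k+8) → ZMod 2)) = dualSet (C : Set (Fin (24*k+8) → ZMod 2)))
    (hd : minWt C = 4*k+2)
    (hC₀ : (C₀ : Set (Fin (24*k+8) → ZMod 2)) = {x | x ∈ C ∧ 4 ∣ wt x})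
    (C₁ C₃ : Set (Fin (24*k+8) → ZMod 2))
    (h₁ : ∃ v, C₁ = (v + ·) '' (C₀ : Set (Fin (24*k+8) → ZMod 2)))
    (h₃ : ∃ v, C₃ = (v + ·) '' (C₀ : Set (Fin (24*k+8) → ZMod 2)))
    (hS13 : dualSet (C₀ : Set (Fin (24*k+8) → ZMod 2)) \ ↑C = C₁ ∪ C₃)
    (hS : minWtSet (dualSet (C₀ : Set (Fin (24*k+8) → ZMod 2)) \ ↑C) = 4*k+4) :
    ∃ D₁ D₃ : Submodule (ZMod 2) (Fin (24*k+8) → ZMod 2),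
      (D₁ : Set (Fin (24*k+8) → ZMod 2)) = ↑C₀ ∪ C₁ ∧
      (D₃ : Set (Fin (24*k+8) → ZMod 2)) = ↑C₀ ∪ C₃ ∧
      (D₁ : Set (Fin (24*k+8) → ZMod 2)) = dualSet (D₁ : Set (Fin (24*k+8) → ZMod 2)) ∧
      (∀ x ∈ D₁, 4 ∣ wt x) ∧ minWt D₁ = 4*k+4 ∧ coveringRadius D₁ = 4*k+2 ∧
      (D₃ : Set (Fin (24*k+8) → ZMod 2)) = dualSet (D₃ : Set (Fin (24*k+8) → ZMod 2)) ∧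
      (∀ x ∈ D₃, 4 ∣ wt x) ∧ minWt D₃ = 4*k+4 ∧ coveringRadius D₃ = 4*k+2 := by
  have h : IsDoublyEvenSubcodeOfSelfDual C₀ C := ⟨hsd, fun x => Set.ext_iff.mp hC₀ x⟩
  obtain ⟨v₁, rfl⟩ := h₁
  obtain ⟨v₃, rfl⟩ := h₃
  have hv₁ : v₁ ∈ shadow C C₀ := hS13.superset (Or.inl ⟨0, C₀.zero_mem, add_zero v₁⟩)
  have hv₃ : v₃ ∈ shadow C C₀ := hS13.superset (Or.inr ⟨0, C₀.zero_mem, add_zero v₃⟩)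
  obtain ⟨hsd₁, hde₁, hmin₁, hcov₁⟩ := h.sup_span_extremal hd hS hv₁
  obtain ⟨hsd₃, hde₃, hmin₃, hcov₃⟩ := h.sup_span_extremal hd hS hv₃
  exact ⟨_, _, ZModModule.coe_sup_span_singleton C₀ v₁, ZModModule.coe_sup_span_singleton C₀ v₃,
    hsd₁, hde₁, hmin₁, hcov₁, hsd₃, hde₃, hmin₃, hcov₃⟩

theorem stmt8 (k : ℕ) (C C₀ : Submodule (ZMod 2) (Fin (24*k+8) → ZMod 2))
    (hsd : (C : Set (Fin (24*k+8) → ZMod 2)) = dualSet (C : Set (Fin (24*k+8) → ZMod 2)))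
    (hse : ∃ x ∈ C, wt x % 4 = 2)
    (hd : minWt C = 4*k+2)
    (hC₀ : (C₀ : Set (Fin (24*k+8) → ZMod 2)) = {x | x ∈ C ∧ 4 ∣ wt x})
    (C₁ C₂ C₃ : Set (Fin (24*k+8) → ZMod 2))
    (h₁ : ∃ v, C₁ = (v + ·) '' (C₀ : Set (Fin (24*k+8) → ZMod 2)))
    (h₂ : ∃ v, C₂ = (v + ·) '' (C₀ : Set (Fin (24*k+8) → ZMod 2)))
    (h₃ : ∃ v, C₃ = (v + ·) '' (C₀ : Set (Fin (24*k+8) → ZMod 2)))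
    (hdisj : List.Pairwise Disjoint [(C₀ : Set (Fin (24*k+8) → ZMod 2)), C₁, C₂, C₃])
    (hpart : dualSet (C₀ : Set (Fin (24*k+8) → ZMod 2)) = ↑C₀ ∪ C₁ ∪ C₂ ∪ C₃)
    (hC : (C : Set (Fin (24*k+8) → ZMod 2)) = ↑C₀ ∪ C₂)
    (hS13 : dualSet (C₀ : Set (Fin (24*k+8) → ZMod 2)) \ ↑C = C₁ ∪ C₃)
    (hS : minWtSet (dualSet (C₀ : Set (Fin (24*k+8) → ZMod 2)) \ ↑C) = 4*k+4) :
    ∃ D₁ D₃ : Submodule (ZMod 2) (Fin (24*k+8) → ZMod 2),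
      (D₁ : Set (Fin (24*k+8) → ZMod 2)) = ↑C₀ ∪ C₁ ∧
      (D₃ : Set (Fin (24*k+8) → ZMod 2)) = ↑C₀ ∪ C₃ ∧
      (D₁ : Set (Fin (24*k+8) → ZMod 2)) = dualSet (D₁ : Set (Fin (24*k+8) → ZMod 2)) ∧
      (∀ x ∈ D₁, 4 ∣ wt x) ∧ minWt D₁ = 4*k+4 ∧ coveringRadius D₁ = 4*k+2 ∧
      (D₃ : Set (Fin (24*k+8) → ZMod 2)) = dualSet (D₃ : Set (Fin (24*k+8) → ZMod 2)) ∧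
      (∀ x ∈ D₃, 4 ∣ wt x) ∧ minWt D₃ = 4*k+4 ∧ coveringRadius D₃ = 4*k+2 :=
  stmt8_general k C C₀ hsd hd hC₀ C₁ C₃ h₁ h₃ hS13 hS
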